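/- arXiv:1202.0670 — 2 statements merged into one kernel-verified Lean document; each statement's English description precedes it below -/
import Mathlib

section
/- Let C be a 2-identifying code in the hexagonal grid G_H, and let c ∈ C satisfy I_2(C;c) = {c} (i.e., c is the unique codeword within distance 2 of itself). If at least two of the three vertices c + (−2,1), c + (2,1), c + (0,−1) (for c of the parity where c is adjacent to c + (0,1)) belong to C, then s_2(C;c) ≤ 14/3. -/
def hexGraph : SimpleGraph (ℤ × ℤ) where
  Adj u v := (u.2 = v.2 ∧ (u.1 = v.1 + 1 ∨ u.1 = v.1 - 1)) ∨
    (u.1 = v.1 ∧ (((u.1 + u.2) % 2 = 0 ∧ u.2 = v.2 - 1) ∨ ((u.1 + u.2) % 2 ≠ 0 ∧ u.2 = v.2 + 1)))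
  symm := ⟨by rintro ⟨a, b⟩ ⟨c, d⟩ h; dsimp only at *; omega⟩
  loopless := ⟨by rintro ⟨a, b⟩ h; dsimp only at h; omega⟩

def hexBall (r : ℕ) (u : ℤ × ℤ) : Set (ℤ × ℤ) := {x | hexGraph.dist u x ≤ r}

def I2 (C : Set (ℤ × ℤ)) (u : ℤ × ℤ) : Set (ℤ × ℤ) := hexBall 2 u ∩ C

def isIdentifying2 (C : Set (ℤ × ℤ)) : Prop :=
  ∀ u : ℤ × ℤ, (I2 C u).Nonempty ∧ ∀ v : ℤ × ℤ, u ≠ v → I2 C u ≠ I2 C v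

noncomputable def share2 (C : Set (ℤ × ℤ)) (c : ℤ × ℤ) : ℝ :=
  ∑' u : (hexBall 2 c), 1 / ((I2 C ↑u).ncard : ℝ)

def Q (n : ℕ) : Set (ℤ × ℤ) := {p | |p.1| ≤ (n : ℤ) ∧ |p.2| ≤ (n : ℤ)}

noncomputable def density (C : Set (ℤ × ℤ)) : ℝ :=
  Filter.limsup (fun n : ℕ => ((C ∩ Q n).ncard : ℝ) / ((Q n).ncard : ℝ)) Filter.atTop

/-!
Each of the ten vertices `p` of `B₂(c)` contributes `1/|I₂(p)|`. The centre contributes `1`; every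
other `p` has `c ∈ I₂(p) ≠ I₂(c) = {c}`, so contributes at most `1/2`. Two codewords `x ≠ y` among
the three outer vertices lie within distance 2 of seven of these nine vertices, and such a `p`
contributes more than `1/3` only if `I₂(p)` is `{c, x}` or `{c, y}`, which by identifiability
happens for at most two of them. So at least five contribute at most `1/3`, and
`s₂(c) ≤ 1 + 9/2 - 5/6 = 14/3`.
-/

open SimpleGraph

def hexNbrs (u : ℤ × ℤ) : Finset (ℤ × ℤ) :=
  {(u.1 + 1, u.2), (u.1 - 1, u.2), (u.1, if (u.1 + u.2) % 2 = 0 then u.2 + 1 else u.2 - 1)}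

lemma hexGraph_adj_iff {u v : ℤ × ℤ} : hexGraph.Adj u v ↔ v ∈ hexNbrs u := by
  obtain ⟨a, b⟩ := u
  obtain ⟨c, d⟩ := v
  simp only [hexGraph, hexNbrs, Finset.mem_insert, Finset.mem_singleton, Prod.mk.injEq]
  split_ifs <;> omega

lemma SimpleGraph.reachable_of_reachable_add_one {V : Type*} {G : SimpleGraph V} {f : ℤ → V}
    (hf : ∀ n, G.Reachable (f n) (f (n + 1))) (m n : ℤ) : G.Reachable (f m) (f n) := by
  have h₀ : ∀ n, G.Reachable (f 0) (f n) := fun n => by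
    induction n using Int.induction_on with
    | zero => rfl
    | succ k ih => exact ih.trans (hf k)
    | pred k ih => exact ih.trans (by simpa using (hf (-k - 1)).symm)
  exact (h₀ m).symm.trans (h₀ n)

lemma hexGraph_reachable_right (i j : ℤ) : hexGraph.Reachable (i, j) (i + 1, j) :=
  Adj.reachable (by simp [hexGraph_adj_iff, hexNbrs])

lemma hexGraph_reachable_up (i j : ℤ) : hexGraph.Reachable (i, j) (i, j + 1) := by
  by_cases h : (i + j) % 2 = 0
  · exact Adj.reachable (by simp [hexGraph_adj_iff, hexNbrs, h])
  · have h₁ : hexGraph.Adj (i + 1, j) (i + 1, j + 1) := by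
      simp [hexGraph_adj_iff, hexNbrs, show (i + 1 + j) % 2 = 0 by omega]
    have h₂ : hexGraph.Adj (i, j + 1) (i + 1, j + 1) := by simp [hexGraph_adj_iff, hexNbrs]
    exact (hexGraph_reachable_right i j).trans (h₁.reachable.trans h₂.reachable.symm)

lemma hexGraph_connected : hexGraph.Connected := by
  refine (connected_iff_exists_forall_reachable _).mpr ⟨(0, 0), fun ⟨i, j⟩ => ?_⟩
  exact (reachable_of_reachable_add_one (f := (·, 0)) (hexGraph_reachable_right · 0) 0 i).trans
    (reachable_of_reachable_add_one (f := (i, ·)) (hexGraph_reachable_up i) 0 j)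

def hexBall2Finset (u : ℤ × ℤ) : Finset (ℤ × ℤ) :=
  insert u ((hexNbrs u).biUnion fun w => insert w (hexNbrs w))

lemma mem_hexBall2Finset_self (u : ℤ × ℤ) : u ∈ hexBall2Finset u :=
  Finset.mem_insert_self _ _

lemma hexGraph_dist_le_two_iff {u v : ℤ × ℤ} :
    hexGraph.dist u v ≤ 2 ↔ v ∈ hexBall2Finset u := by
  simp only [hexBall2Finset, Finset.mem_insert, Finset.mem_biUnion, ← hexGraph_adj_iff]
  constructor
  · intro hle
    -- `dist` is `0` between unreachable vertices, so connectivity is what gives a short walk.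
    obtain ⟨p, hp⟩ := hexGraph_connected.exists_walk_length_eq_dist u v
    match p, hp with
    | .nil, _ => exact .inl rfl
    | .cons h .nil, _ => exact .inr ⟨_, h, .inl rfl⟩
    | .cons h (.cons h' .nil), _ => exact .inr ⟨_, h, .inr h'⟩
    | .cons _ (.cons _ (.cons _ _)), hp => simp at hp; omega
  · rintro (rfl | ⟨w, hw, rfl | hv⟩)
    · simp
    · exact (dist_le (.cons hw .nil)).trans (by simp)
    · exact dist_le (.cons hw (.cons hv .nil))

lemma hexBall_two_eq (u : ℤ × ℤ) : hexBall 2 u = ↑(hexBall2Finset u) :=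
  Set.ext fun _ => hexGraph_dist_le_two_iff

lemma card_erase_hexBall2Finset_origin : ((hexBall2Finset (0, 0)).erase (0, 0)).card = 9 := by
  decide

lemma seven_le_card_inter_hexBall2Finset_union {x y : ℤ × ℤ}
    (hx : x ∈ ({((-2 : ℤ), (1 : ℤ)), (2, 1), (0, -1)} : Set (ℤ × ℤ)))
    (hy : y ∈ ({((-2 : ℤ), (1 : ℤ)), (2, 1), (0, -1)} : Set (ℤ × ℤ))) (hxy : x ≠ y) :
    7 ≤ ((hexBall2Finset (0, 0)).erase (0, 0) ∩ (hexBall2Finset x ∪ hexBall2Finset y)).card := by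
  simp only [Set.mem_insert_iff, Set.mem_singleton_iff] at hx hy
  rcases hx with rfl | rfl | rfl <;> rcases hy with rfl | rfl | rfl <;>
    first | exact absurd rfl hxy | decide

lemma one_div_ncard_le_third_or_eq_pair {α : Type*} {S : Set α} {a b : α} (hab : a ≠ b)
    (ha : a ∈ S) (hb : b ∈ S) : 1 / (S.ncard : ℝ) ≤ 1 / 3 ∨ S = {a, b} := by
  refine or_iff_not_imp_right.mpr fun hS => ?_
  rcases S.finite_or_infinite with hfin | hinf
  · have h3 : 3 ≤ S.ncard := by
      have := Set.ncard_lt_ncard ((Set.pair_subset ha hb).ssubset_of_ne (Ne.symm hS)) hfin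
      rw [Set.ncard_pair hab] at this
      omega
    exact one_div_le_one_div_of_le (by norm_num) (by exact_mod_cast h3)
  · simp [hinf.ncard]

lemma one_div_ncard_le_half {α : Type*} {S : Set α} {a b : α} (hab : a ≠ b)
    (ha : a ∈ S) (hb : b ∈ S) : 1 / (S.ncard : ℝ) ≤ 1 / 2 := by
  rcases one_div_ncard_le_third_or_eq_pair hab ha hb with h | rfl
  · linarith
  · simp [Set.ncard_pair hab]

lemma Finset.sum_le_of_le_half_of_le_third {ι : Type*} (s : Finset ι) (f : ι → ℝ)
    (hf : ∀ i ∈ s, f i ≤ 1 / 2) :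
    ∑ i ∈ s, f i ≤ s.card / 2 - (s.filter (f · ≤ 1 / 3)).card / 6 := by
  rw [← s.sum_filter_add_sum_filter_not (f · ≤ 1 / 3)]
  have hthird := (s.filter (f · ≤ 1 / 3)).sum_le_card_nsmul f (1 / 3)
    fun i hi => (mem_filter.mp hi).2
  have hhalf := (s.filter (¬ f · ≤ 1 / 3)).sum_le_card_nsmul f (1 / 2)
    fun i hi => hf i (mem_filter.mp hi).1
  have hcard := congrArg (Nat.cast : ℕ → ℝ) (s.card_filter_add_card_filter_not (f · ≤ 1 / 3))
  simp only [nsmul_eq_mul, Nat.cast_add] at hthird hhalf hcard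
  linarith

noncomputable def invCardI2 (C : Set (ℤ × ℤ)) (p : ℤ × ℤ) : ℝ := 1 / ((I2 C p).ncard : ℝ)

lemma share2_eq_sum (C : Set (ℤ × ℤ)) (u : ℤ × ℤ) :
    share2 C u = ∑ p ∈ hexBall2Finset u, invCardI2 C p := by
  rw [share2, hexBall_two_eq]
  exact Finset.tsum_subtype' _ (invCardI2 C)

section IdentifyingCode

variable {C : Set (ℤ × ℤ)} {c : ℤ × ℤ}

lemma mem_I2_of_mem_hexBall2Finset {u p : ℤ × ℤ} (hp : p ∈ hexBall2Finset u) (hu : u ∈ C) :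
    u ∈ I2 C p :=
  ⟨dist_comm.trans_le (hexGraph_dist_le_two_iff.mpr hp), hu⟩

lemma invCardI2_le_half (hC : isIdentifying2 C) (hI : I2 C c = {c}) {p : ℤ × ℤ}
    (hp : p ≠ c) (hcp : c ∈ I2 C p) : invCardI2 C p ≤ 1 / 2 := by
  obtain ⟨z, hz, hzc⟩ : ∃ z ∈ I2 C p, z ≠ c := by
    by_contra! h
    exact (hC p).2 c hp (hI ▸ Set.eq_singleton_iff_unique_mem.mpr ⟨hcp, h⟩)
  exact one_div_ncard_le_half (Ne.symm hzc) hcp hz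

lemma card_le_card_filter_invCardI2_le_third_add_two (hC : isIdentifying2 C)
    {x y : ℤ × ℤ} (hxc : x ≠ c) (hyc : y ≠ c) (s : Finset (ℤ × ℤ))
    (hs : ∀ p ∈ s, c ∈ I2 C p ∧ (x ∈ I2 C p ∨ y ∈ I2 C p)) :
    s.card ≤ (s.filter (invCardI2 C · ≤ 1 / 3)).card + 2 := by
  classical
  rw [← s.card_filter_add_card_filter_not (invCardI2 C · ≤ 1 / 3)]
  gcongr
  calc _ ≤ ({{c, x}, {c, y}} : Finset (Set (ℤ × ℤ))).card := by
        refine Finset.card_le_card_of_injOn (I2 C) (fun p hp => ?_) fun p _ q _ hpq => ?_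
        · obtain ⟨hps, hpbig⟩ := Finset.mem_filter.mp hp
          obtain ⟨hcp, hxp | hyp⟩ := hs p hps
          · simp [(one_div_ncard_le_third_or_eq_pair hxc.symm hcp hxp).resolve_left hpbig]
          · simp [(one_div_ncard_le_third_or_eq_pair hyc.symm hcp hyp).resolve_left hpbig]
        · by_contra hne
          exact (hC p).2 q hne hpq
    _ ≤ 2 := Finset.card_le_two

end IdentifyingCode

lemma five_le_card_filter_invCardI2_le_third {C : Set (ℤ × ℤ)} (hC : isIdentifying2 C)
    (hc : ((0 : ℤ), (0 : ℤ)) ∈ C) {x y : ℤ × ℤ}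
    (hxT : x ∈ ({((-2 : ℤ), (1 : ℤ)), (2, 1), (0, -1)} : Set (ℤ × ℤ)))
    (hyT : y ∈ ({((-2 : ℤ), (1 : ℤ)), (2, 1), (0, -1)} : Set (ℤ × ℤ)))
    (hxC : x ∈ C) (hyC : y ∈ C) (hxy : x ≠ y) :
    5 ≤ (((hexBall2Finset (0, 0)).erase (0, 0)).filter (invCardI2 C · ≤ 1 / 3)).card := by
  set B := (hexBall2Finset (0, 0)).erase (0, 0)
  set N := B ∩ (hexBall2Finset x ∪ hexBall2Finset y)
  have hxc : x ≠ (0, 0) := by rintro rfl; simp at hxT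
  have hyc : y ≠ (0, 0) := by rintro rfl; simp at hyT
  have hN := card_le_card_filter_invCardI2_le_third_add_two hC hxc hyc N fun p hp => by
    obtain ⟨hpB, hpxy⟩ := Finset.mem_inter.mp hp
    exact ⟨mem_I2_of_mem_hexBall2Finset (Finset.mem_of_mem_erase hpB) hc,
      (Finset.mem_union.mp hpxy).imp (mem_I2_of_mem_hexBall2Finset · hxC)
        (mem_I2_of_mem_hexBall2Finset · hyC)⟩
  have h7 : 7 ≤ N.card := seven_le_card_inter_hexBall2Finset_union hxT hyT hxy
  have hsub : (N.filter (invCardI2 C · ≤ 1 / 3)).card ≤ (B.filter (invCardI2 C · ≤ 1 / 3)).card :=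
    Finset.card_le_card (Finset.filter_subset_filter _ Finset.inter_subset_left)
  omega

theorem stmt9 (C : Set (ℤ × ℤ)) (hC : isIdentifying2 C)
    (hc : ((0 : ℤ), (0 : ℤ)) ∈ C)
    (hI : I2 C ((0 : ℤ), (0 : ℤ)) = {((0 : ℤ), (0 : ℤ))})
    (htwo : 2 ≤ (({((-2 : ℤ), (1 : ℤ)), (2, 1), (0, -1)} : Set (ℤ × ℤ)) ∩ C).ncard) :
    share2 C ((0 : ℤ), (0 : ℤ)) ≤ 14 / 3 := by
  obtain ⟨x, ⟨hxT, hxC⟩, y, ⟨hyT, hyC⟩, hxy⟩ := (Set.one_lt_ncard (Set.toFinite _)).mp htwo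
  have hgood : (5 : ℝ) ≤ _ :=
    Nat.cast_le.mpr (five_le_card_filter_invCardI2_le_third hC hc hxT hyT hxC hyC hxy)
  have hsum := ((hexBall2Finset (0, 0)).erase (0, 0)).sum_le_of_le_half_of_le_third (invCardI2 C)
    fun p hp => invCardI2_le_half hC hI (Finset.ne_of_mem_erase hp)
      (mem_I2_of_mem_hexBall2Finset (Finset.mem_of_mem_erase hp) hc)
  rw [card_erase_hexBall2Finset_origin] at hsum
  rw [share2_eq_sum, ← Finset.add_sum_erase _ _ (mem_hexBall2Finset_self _), invCardI2, hI,
    Set.ncard_singleton]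
  push_cast at hsum hgood ⊢
  linarith
end

section
/- If C is a 2-identifying code in the hexagonal grid G_H and every codeword c ∈ C satisfies s_2(C;c) ≤ 5, then the density of C is at least 1/5. -/
/-!
A codeword `c` hands out the total weight `s_2(C;c) ≤ 5`, the share `1 / |I_2(C;u)|` to each
vertex `u` of its ball. A vertex `u ∈ Q_n` has its whole `2`-ball, hence `I_2(C;u) ≠ ∅`, inside
`Q_{n+2}`, so it collects exactly `1` from the codewords in `Q_{n+2}`. Thus
`|Q_n| ≤ 5 |C ∩ Q_{n+2}|`, and `|Q_n| / |Q_{n+2}| = (2n+1)² / (2n+5)² → 1`.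
-/

open Filter Topology Finset

theorem SimpleGraph.reachable_of_reachable_succ {V : Type*} {G : SimpleGraph V} (f : ℤ → V)
    (h : ∀ k, G.Reachable (f k) (f (k + 1))) (a b : ℤ) : G.Reachable (f a) (f b) := by
  have from_zero : ∀ b, G.Reachable (f 0) (f b) := by
    intro b
    induction b using Int.induction_on with
    | zero => rfl
    | succ i ih => exact ih.trans (h i)
    | pred i ih => exact ih.trans (by simpa using (h (-i - 1)).symm)
  exact (from_zero a).symm.trans (from_zero b)

theorem hexGraph_adj_right (x y : ℤ) : hexGraph.Adj (x, y) (x + 1, y) :=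
  Or.inl ⟨rfl, Or.inr (by ring)⟩

theorem hexGraph_reachable_up_s11 (x y : ℤ) : hexGraph.Reachable (x, y) (x, y + 1) := by
  by_cases h : (x + y) % 2 = 0
  · exact SimpleGraph.Adj.reachable (Or.inr ⟨rfl, Or.inl ⟨h, by ring⟩⟩)
  · have up : hexGraph.Adj (x + 1, y) (x + 1, y + 1) := Or.inr ⟨rfl, Or.inl ⟨by omega, by ring⟩⟩
    exact (hexGraph_adj_right x y).reachable.trans <|
      up.reachable.trans (hexGraph_adj_right x (y + 1)).symm.reachable

theorem hexGraph_preconnected : hexGraph.Preconnected := by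
  rintro ⟨a, b⟩ ⟨c, d⟩
  have vertical :=
    SimpleGraph.reachable_of_reachable_succ (fun k => (a, k)) (hexGraph_reachable_up_s11 a)
  have horizontal := SimpleGraph.reachable_of_reachable_succ (fun k => (k, d))
    (fun k => (hexGraph_adj_right k d).reachable)
  exact (vertical b d).trans (horizontal a c)

theorem hexGraph_natAbs_sub_add_natAbs_sub_le_length {u v : ℤ × ℤ} (w : hexGraph.Walk u v) :
    (u.1 - v.1).natAbs + (u.2 - v.2).natAbs ≤ w.length := by
  induction w with
  | nil => simp
  | cons h _ ih =>
    rw [SimpleGraph.Walk.length_cons]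
    change _ ∨ _ at h
    omega

-- `hexGraph.dist` is `0` between unreachable vertices, so boundedness of balls needs connectivity.
theorem abs_sub_le_of_mem_hexBall {r : ℕ} {u x : ℤ × ℤ} (hx : x ∈ hexBall r u) :
    |x.1 - u.1| ≤ r ∧ |x.2 - u.2| ≤ r := by
  obtain ⟨w, hw⟩ := (hexGraph_preconnected u x).exists_walk_length_eq_dist
  have hlen := hexGraph_natAbs_sub_add_natAbs_sub_le_length w
  have hdist : hexGraph.dist u x ≤ r := hx
  rw [abs_le, abs_le]
  omega

theorem hexBall_finite (r : ℕ) (u : ℤ × ℤ) : (hexBall r u).Finite := by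
  refine ((Set.finite_Icc (u.1 - r) (u.1 + r)).prod (Set.finite_Icc (u.2 - r) (u.2 + r))).subset ?_
  intro x hx
  obtain ⟨h1, h2⟩ := abs_sub_le_of_mem_hexBall hx
  rw [abs_le] at h1 h2
  exact ⟨⟨by omega, by omega⟩, ⟨by omega, by omega⟩⟩

theorem mem_hexBall_comm {r : ℕ} {u x : ℤ × ℤ} : x ∈ hexBall r u ↔ u ∈ hexBall r x := by
  change hexGraph.dist u x ≤ r ↔ hexGraph.dist x u ≤ r
  rw [SimpleGraph.dist_comm]

theorem hexBall_subset_Q {r n : ℕ} {u : ℤ × ℤ} (hu : u ∈ Q n) : hexBall r u ⊆ Q (n + r) := by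
  intro x hx
  obtain ⟨h1, h2⟩ := abs_sub_le_of_mem_hexBall hx
  obtain ⟨hu1, hu2⟩ := hu
  rw [abs_le] at h1 h2 hu1 hu2
  exact ⟨abs_le.2 ⟨by omega, by omega⟩, abs_le.2 ⟨by omega, by omega⟩⟩

theorem share2_eq_sum_s11 (C : Set (ℤ × ℤ)) (c : ℤ × ℤ) :
    share2 C c = ∑ u ∈ (hexBall_finite 2 c).toFinset, 1 / ((I2 C u).ncard : ℝ) := by
  rw [share2, ← Finset.tsum_subtype', Set.Finite.coe_toFinset]

theorem sum_filter_le_share2 (C : Set (ℤ × ℤ)) (c : ℤ × ℤ) (t : Finset (ℤ × ℤ))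
    [DecidablePred (· ∈ hexBall 2 c)] :
    ∑ u ∈ t with u ∈ hexBall 2 c, 1 / ((I2 C u).ncard : ℝ) ≤ share2 C c := by
  rw [share2_eq_sum_s11]
  refine Finset.sum_le_sum_of_subset_of_nonneg (fun u hu => ?_) (fun u _ _ => by positivity)
  simpa using (Finset.mem_filter.1 hu).2

theorem coe_Icc_product_Icc (n : ℕ) :
    (↑(Finset.Icc (-(n : ℤ)) n ×ˢ Finset.Icc (-(n : ℤ)) n) : Set (ℤ × ℤ)) = Q n := by
  ext p
  simp only [Finset.coe_product, Finset.coe_Icc, Set.mem_prod, Set.mem_Icc, ← abs_le]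
  rfl

theorem ncard_Q (n : ℕ) : (Q n).ncard = (2 * n + 1) ^ 2 := by
  rw [← coe_Icc_product_Icc, Set.ncard_coe_finset, Finset.card_product, Int.card_Icc,
    show ((n : ℤ) + 1 - -n).toNat = 2 * n + 1 by omega, sq]

theorem Finset.sum_sum_filter_inv_card_filter {α β : Type*} (s : Finset α) (t : Finset β)
    (r : α → β → Prop) [∀ a b, Decidable (r a b)] (h : ∀ b ∈ t, ∃ a ∈ s, r a b) :
    ∑ a ∈ s, ∑ b ∈ t with r a b, (#{a' ∈ s | r a' b} : ℝ)⁻¹ = #t := by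
  rw [Finset.sum_comm' (t' := t) (s' := fun b => {a ∈ s | r a b})
    (fun a b => by simp only [Finset.mem_filter]; tauto)]
  calc ∑ b ∈ t, ∑ a ∈ s with r a b, (#{a' ∈ s | r a' b} : ℝ)⁻¹ = ∑ _ ∈ t, (1 : ℝ) := by
        refine Finset.sum_congr rfl fun b hb => ?_
        obtain ⟨a, ha, hab⟩ := h b hb
        have hpos : 0 < #{a' ∈ s | r a' b} := Finset.card_pos.2 ⟨a, by simp [ha, hab]⟩
        rw [Finset.sum_const, nsmul_eq_mul, mul_inv_cancel₀ (by positivity)]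
    _ = #t := by simp

theorem ncard_Q_le_mul_ncard_inter_Q {C : Set (ℤ × ℤ)} (hdom : ∀ u, (I2 C u).Nonempty) {k : ℝ}
    (hs : ∀ c ∈ C, share2 C c ≤ k) (n : ℕ) :
    ((Q n).ncard : ℝ) ≤ k * (C ∩ Q (n + 2)).ncard := by
  classical
  set B := Finset.Icc (-(n : ℤ)) n ×ˢ Finset.Icc (-(n : ℤ)) n
  set A := {c ∈ Finset.Icc (-((n + 2 : ℕ) : ℤ)) (n + 2 : ℕ) ×ˢ
    Finset.Icc (-((n + 2 : ℕ) : ℤ)) (n + 2 : ℕ) | c ∈ C}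
  have hA : (A : Set (ℤ × ℤ)) = C ∩ Q (n + 2) := by
    rw [Finset.coe_filter, ← coe_Icc_product_Icc (n + 2)]
    ext c
    exact and_comm
  have hI : ∀ u ∈ B, ({c ∈ A | u ∈ hexBall 2 c} : Finset (ℤ × ℤ)) = I2 C u := by
    intro u hu
    have hu : u ∈ Q n := by rw [← coe_Icc_product_Icc]; exact hu
    ext c
    rw [Finset.coe_filter]
    change c ∈ (A : Set (ℤ × ℤ)) ∧ u ∈ hexBall 2 c ↔ c ∈ hexBall 2 u ∩ C
    rw [hA, mem_hexBall_comm]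
    exact ⟨fun ⟨⟨hc, _⟩, hcu⟩ => ⟨hcu, hc⟩, fun ⟨hcu, hc⟩ => ⟨⟨hc, hexBall_subset_Q hu hcu⟩, hcu⟩⟩
  calc ((Q n).ncard : ℝ) = #B := by rw [← coe_Icc_product_Icc, Set.ncard_coe_finset]
    _ = ∑ c ∈ A, ∑ u ∈ B with u ∈ hexBall 2 c, (#{c' ∈ A | u ∈ hexBall 2 c'} : ℝ)⁻¹ := by
      refine (Finset.sum_sum_filter_inv_card_filter A B _ fun u hu => ?_).symm
      obtain ⟨c, hc⟩ := hdom u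
      rw [← hI u hu, Finset.coe_filter] at hc
      exact ⟨c, hc⟩
    _ = ∑ c ∈ A, ∑ u ∈ B with u ∈ hexBall 2 c, 1 / ((I2 C u).ncard : ℝ) := by
      refine Finset.sum_congr rfl fun c _ => Finset.sum_congr rfl fun u hu => ?_
      rw [one_div, ← hI u (Finset.mem_filter.1 hu).1, Set.ncard_coe_finset]
    _ ≤ ∑ c ∈ A, k := Finset.sum_le_sum fun c hc =>
      (sum_filter_le_share2 C c B).trans (hs c (Finset.mem_filter.1 hc).2)
    _ = k * (C ∩ Q (n + 2)).ncard := by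
      rw [Finset.sum_const, nsmul_eq_mul, mul_comm, ← hA, Set.ncard_coe_finset]

theorem inv_le_density {C : Set (ℤ × ℤ)} (hdom : ∀ u, (I2 C u).Nonempty) {k : ℝ} (hk : 0 < k)
    (hs : ∀ c ∈ C, share2 C c ≤ k) : k⁻¹ ≤ density C := by
  set a : ℕ → ℝ := fun n => ((C ∩ Q n).ncard : ℝ) / (Q n).ncard
  set b : ℕ → ℝ := fun m => (((2 * m + 1 : ℕ) : ℝ) / ((2 * m + 1 : ℕ) + 4)) ^ 2 / k
  have hb : Tendsto b atTop (𝓝 k⁻¹) := by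
    have h := (tendsto_natCast_div_add_atTop (4 : ℝ)).comp
      (tendsto_atTop_mono (fun m => by omega : ∀ m : ℕ, m ≤ 2 * m + 1) tendsto_id)
    simpa [b, Function.comp_def] using (h.pow 2).div_const k
  have hba : ∀ m, b m ≤ a (m + 2) := by
    intro m
    have hQ : (0 : ℝ) < (Q (m + 2)).ncard := by rw [ncard_Q]; positivity
    have hbm : b m = (Q m).ncard / k / (Q (m + 2)).ncard := by
      simp only [b, ncard_Q]
      push_cast
      field_simp
      ring
    rw [hbm]
    exact div_le_div_of_nonneg_right
      ((div_le_iff₀' hk).2 (ncard_Q_le_mul_ncard_inter_Q hdom hs m)) hQ.le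
  have ha_le_one : ∀ n, a n ≤ 1 := fun n => by
    have hfin : (Q n).Finite := coe_Icc_product_Icc n ▸ Finset.finite_toSet _
    exact div_le_one_of_le₀ (by exact_mod_cast Set.ncard_le_ncard Set.inter_subset_right hfin)
      (Nat.cast_nonneg _)
  calc k⁻¹ = limsup b atTop := hb.limsup_eq.symm
    _ ≤ limsup (fun m => a (m + 2)) atTop :=
      limsup_le_limsup (Eventually.of_forall hba) hb.isCoboundedUnder_le
        (isBoundedUnder_of ⟨1, fun m => ha_le_one (m + 2)⟩)
    _ = density C := limsup_nat_add a 2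

theorem stmt11 (C : Set (ℤ × ℤ)) (hC : isIdentifying2 C)
    (hs : ∀ c ∈ C, share2 C c ≤ 5) :
    density C ≥ 1 / 5 := by
  rw [ge_iff_le, one_div]
  exact inv_le_density (fun u => (hC u).1) (by norm_num) hs
end
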